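/- Let R be a Γ-graded integral domain and ⋆ a homogeneous star operation on R. Then (e(⋆))_f = (e(⋆_f))_f as classical star operations on R, and (e(⋆))_f is the largest finite-type classical star operation on R extending ⋆_f. -/

import Mathlib

open FractionalIdeal
open scoped Classical

section Setup

variable {Γ : Type*} [AddCommMonoid Γ] [LinearOrder Γ] [IsOrderedCancelAddMonoid Γ] [DecidableEq Γ]
  {R : Type*} [CommRing R] [IsDomain R]
  (𝒜 : Γ → AddSubgroup R) [GradedRing 𝒜]
  (K : Type*) [Field K] [Algebra R K] [IsFractionRing R K]

/-- The integral ideal corresponding to a fractional ideal contained in `R`. -/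
def idealOf (J : FractionalIdeal (nonZeroDivisors R) K) : Ideal R :=
  (J : Submodule R K).comap (Algebra.linearMap R K)

/-- An integral ideal is homogeneous if it contains all homogeneous components of its elements. -/
def IsHomIdeal (I : Ideal R) : Prop := ∀ f ∈ I, ∀ γ : Γ, GradedRing.proj 𝒜 γ f ∈ I

/-- `C(I)`: the homogeneous ideal generated by the homogeneous components of elements of `I`. -/
def homC (I : Ideal R) : Ideal R :=
  Ideal.span {x | ∃ f ∈ I, ∃ γ : Γ, x = GradedRing.proj 𝒜 γ f}

/-- `C(J)` for a fractional ideal `J ⊆ R`, as a fractional ideal. -/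
def Cfrac (J : FractionalIdeal (nonZeroDivisors R) K) : FractionalIdeal (nonZeroDivisors R) K :=
  ↑(homC 𝒜 (idealOf K J))

/-- A fractional ideal is homogeneous if some nonzero homogeneous `s ∈ R` multiplies it into a
homogeneous integral ideal. -/
def IsHomFrac (A : FractionalIdeal (nonZeroDivisors R) K) : Prop :=
  ∃ s : R, s ≠ 0 ∧ SetLike.IsHomogeneousElem 𝒜 s ∧
    spanSingleton (nonZeroDivisors R) (algebraMap R K s) * A ≤ 1 ∧
    IsHomIdeal 𝒜 (idealOf K (spanSingleton (nonZeroDivisors R) (algebraMap R K s) * A))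

/-- A homogeneous element of the homogeneous quotient field, viewed inside `K`. -/
def IsHomElem (x : K) : Prop :=
  ∃ a b : R, SetLike.IsHomogeneousElem 𝒜 a ∧ SetLike.IsHomogeneousElem 𝒜 b ∧ b ≠ 0 ∧
    x * algebraMap R K b = algebraMap R K a

end Setup

/-- A homogeneous star operation on the graded domain `R`. -/
structure HomStarOp {Γ : Type*} [AddCommMonoid Γ] [LinearOrder Γ] [IsOrderedCancelAddMonoid Γ] [DecidableEq Γ]
    {R : Type*} [CommRing R] [IsDomain R] (𝒜 : Γ → AddSubgroup R) [GradedRing 𝒜]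
    (K : Type*) [Field K] [Algebra R K] [IsFractionRing R K] where
  toFun : FractionalIdeal (nonZeroDivisors R) K → FractionalIdeal (nonZeroDivisors R) K
  hom : ∀ A, A ≠ 0 → IsHomFrac 𝒜 K A → IsHomFrac 𝒜 K (toFun A)
  map_span : ∀ x : K, x ≠ 0 → IsHomElem 𝒜 K x →
    toFun (spanSingleton (nonZeroDivisors R) x) = spanSingleton (nonZeroDivisors R) x
  map_smul : ∀ x : K, x ≠ 0 → IsHomElem 𝒜 K x → ∀ A, A ≠ 0 → IsHomFrac 𝒜 K A →
    toFun (spanSingleton (nonZeroDivisors R) x * A) = spanSingleton (nonZeroDivisors R) x * toFun A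
  le_star : ∀ A, A ≠ 0 → IsHomFrac 𝒜 K A → A ≤ toFun A
  mono : ∀ A B, A ≠ 0 → B ≠ 0 → IsHomFrac 𝒜 K A → IsHomFrac 𝒜 K B → A ≤ B → toFun A ≤ toFun B
  idem : ∀ A, A ≠ 0 → IsHomFrac 𝒜 K A → toFun (toFun A) = toFun A

/-- A classical star operation on the domain `R`. -/
structure StarOp (R : Type*) [CommRing R] [IsDomain R]
    (K : Type*) [Field K] [Algebra R K] [IsFractionRing R K] where
  toFun : FractionalIdeal (nonZeroDivisors R) K → FractionalIdeal (nonZeroDivisors R) K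
  map_span : ∀ x : K, x ≠ 0 →
    toFun (spanSingleton (nonZeroDivisors R) x) = spanSingleton (nonZeroDivisors R) x
  map_smul : ∀ x : K, x ≠ 0 → ∀ A, A ≠ 0 →
    toFun (spanSingleton (nonZeroDivisors R) x * A) = spanSingleton (nonZeroDivisors R) x * toFun A
  le_star : ∀ A, A ≠ 0 → A ≤ toFun A
  mono : ∀ A B, A ≠ 0 → B ≠ 0 → A ≤ B → toFun A ≤ toFun B
  idem : ∀ A, A ≠ 0 → toFun (toFun A) = toFun A

section EStar

variable {Γ : Type*} [AddCommMonoid Γ] [LinearOrder Γ] [IsOrderedCancelAddMonoid Γ] [DecidableEq Γ]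
  {R : Type*} [CommRing R] [IsDomain R]
  (𝒜 : Γ → AddSubgroup R) [GradedRing 𝒜]
  (K : Type*) [Field K] [Algebra R K] [IsFractionRing R K]

/-- The submodule `⋂ { z⁻¹ (C(zA))^⋆ : 0 ≠ z ∈ (R : A) }`. -/
def eStarSub (s : HomStarOp 𝒜 K) (A : FractionalIdeal (nonZeroDivisors R) K) : Submodule R K :=
  ⨅ z ∈ {z : K | z ≠ 0 ∧ spanSingleton (nonZeroDivisors R) z * A ≤ 1},
    ↑(spanSingleton (nonZeroDivisors R) z⁻¹ *
      s.toFun (Cfrac 𝒜 K (spanSingleton (nonZeroDivisors R) z * A)))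

/-- The extension `e(⋆)` of a homogeneous star operation `⋆`,
`A^{e(⋆)} := ⋂ { z⁻¹ (C(zA))^⋆ : 0 ≠ z ∈ (R : A) }` (which is a fractional ideal whenever
`A` is a nonzero fractional ideal). -/
noncomputable def eStar (s : HomStarOp 𝒜 K) (A : FractionalIdeal (nonZeroDivisors R) K) :
    FractionalIdeal (nonZeroDivisors R) K :=
  if h : IsFractional (nonZeroDivisors R) (eStarSub 𝒜 K s A) then ⟨_, h⟩ else 0

end EStar


/-- `A^{★_f}` as a set: the union of `B^★` over finitely generated `B ⊆ A`. -/
def finTypeSet {R : Type*} [CommRing R] [IsDomain R]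
    (K : Type*) [Field K] [Algebra R K] [IsFractionRing R K]
    (t : FractionalIdeal (nonZeroDivisors R) K → FractionalIdeal (nonZeroDivisors R) K)
    (A : FractionalIdeal (nonZeroDivisors R) K) : Set K :=
  ⋃ B ∈ {B : FractionalIdeal (nonZeroDivisors R) K |
      B ≠ 0 ∧ B ≤ A ∧ (B : Submodule R K).FG}, {x : K | x ∈ t B}

/-- `A^{⋆_f}` as a set: the union of `B^⋆` over finitely generated homogeneous `B ⊆ A`. -/
def homFinTypeSet {Γ : Type*} [AddCommMonoid Γ] [LinearOrder Γ] [IsOrderedCancelAddMonoid Γ] [DecidableEq Γ]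
    {R : Type*} [CommRing R] [IsDomain R]
    (𝒜 : Γ → AddSubgroup R) [GradedRing 𝒜]
    (K : Type*) [Field K] [Algebra R K] [IsFractionRing R K]
    (t : FractionalIdeal (nonZeroDivisors R) K → FractionalIdeal (nonZeroDivisors R) K)
    (A : FractionalIdeal (nonZeroDivisors R) K) : Set K :=
  ⋃ B ∈ {B : FractionalIdeal (nonZeroDivisors R) K |
      B ≠ 0 ∧ B ≤ A ∧ IsHomFrac 𝒜 K B ∧ (B : Submodule R K).FG}, {x : K | x ∈ t B}

/-! For a finitely generated `B` and `0 ≠ z ∈ (R : B)`, the ideal `C(zB)` is a finitely generated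
homogeneous ideal, and on such ideals `⋆` and `⋆_f` agree; hence `e(⋆)` and `e(⋆_f)` agree on
finitely generated ideals, and so do their finite-type parts. If `★` is of finite type and extends
`⋆_f`, then for `x ∈ B^★` we get `zx ∈ (zB)^★ ⊆ C(zB)^★ = C(zB)^{⋆_f} ⊆ C(zB)^⋆`, so
`B^★ ⊆ B^{e(⋆)}`, and therefore `A^★ = A^{★_f} ⊆ A^{(e(⋆))_f}`. -/

open DirectSum
open scoped nonZeroDivisors

theorem Ideal.FG.toIdeal_homogeneousHull {ι σ A : Type*} [Semiring A] [SetLike σ A]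
    [AddSubmonoidClass σ A] (𝒜 : ι → σ) [DecidableEq ι] [AddMonoid ι] [GradedRing 𝒜]
    {I : Ideal A} (hI : I.FG) : (I.homogeneousHull 𝒜).toIdeal.FG := by
  obtain ⟨S, rfl⟩ := hI
  let T : Finset A := S.biUnion fun g =>
    (DFinsupp.support (decompose 𝒜 g)).image fun i => (decompose 𝒜 g i : A)
  have mem_T : ∀ x ∈ T, ∃ g ∈ S, ∃ i, (decompose 𝒜 g i : A) = x := fun x hx => by
    simp only [T, Finset.mem_biUnion, Finset.mem_image] at hx
    obtain ⟨g, hg, i, -, rfl⟩ := hx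
    exact ⟨g, hg, i, rfl⟩
  have hT : (Ideal.span (T : Set A)).IsHomogeneous 𝒜 := Ideal.homogeneous_span 𝒜 _ fun x hx => by
    obtain ⟨g, -, i, rfl⟩ := mem_T x hx
    exact SetLike.isHomogeneousElem_coe _
  have hST : Ideal.span (S : Set A) ≤ Ideal.span (T : Set A) := Ideal.span_le.mpr fun g hg => by
    rw [SetLike.mem_coe, ← sum_support_decompose 𝒜 g]
    exact Ideal.sum_mem _ fun i hi =>
      Ideal.subset_span (Finset.mem_biUnion.mpr ⟨g, hg, Finset.mem_image_of_mem _ hi⟩)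
  refine ⟨T, le_antisymm (Ideal.span_le.mpr fun x hx => ?_)
    ((Ideal.homogeneousHull.gc 𝒜 _ ⟨_, hT⟩).mpr hST)⟩
  obtain ⟨g, hg, i, rfl⟩ := mem_T x hx
  exact Ideal.subset_span ⟨i, ⟨g, Ideal.subset_span hg⟩, rfl⟩

section Homogeneous

variable {Γ : Type*} [AddCommMonoid Γ] [DecidableEq Γ] {R : Type*} [CommRing R]
  (𝒜 : Γ → AddSubgroup R) [GradedRing 𝒜]

theorem isHomIdeal_iff_isHomogeneous (I : Ideal R) : IsHomIdeal 𝒜 I ↔ I.IsHomogeneous 𝒜 := by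
  simp only [IsHomIdeal, GradedRing.proj_apply]
  exact ⟨fun h γ _ hf => h _ hf γ, fun h _ hf γ => h γ hf⟩

theorem homC_eq_toIdeal_homogeneousHull (I : Ideal R) :
    homC 𝒜 I = (I.homogeneousHull 𝒜).toIdeal := by
  simp only [homC, Ideal.homogeneousHull, GradedRing.proj_apply]
  congr 1
  ext x
  simp only [Set.mem_ofPred_eq, Subtype.exists, exists_prop]
  constructor
  · rintro ⟨f, hf, γ, rfl⟩
    exact ⟨γ, f, hf, rfl⟩
  · rintro ⟨γ, f, hf, rfl⟩
    exact ⟨f, hf, γ, rfl⟩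

end Homogeneous

section Cfrac

variable {Γ : Type*} [AddCommMonoid Γ] [DecidableEq Γ] {R : Type*} [CommRing R]
  (𝒜 : Γ → AddSubgroup R) [GradedRing 𝒜] (K : Type*) [Field K] [Algebra R K] [IsFractionRing R K]

theorem idealOf_coeIdeal (I : Ideal R) : idealOf K (I : FractionalIdeal R⁰ K) = I :=
  Submodule.comap_map_eq_of_injective (IsFractionRing.injective R K) I

theorem Cfrac_coeIdeal (I : Ideal R) :
    Cfrac 𝒜 K I = ((I.homogeneousHull 𝒜).toIdeal : FractionalIdeal R⁰ K) := by
  rw [Cfrac, idealOf_coeIdeal, homC_eq_toIdeal_homogeneousHull]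

variable {𝒜 K}

theorem le_Cfrac {J : FractionalIdeal R⁰ K} (hJ : J ≤ 1) : J ≤ Cfrac 𝒜 K J := by
  obtain ⟨I, rfl⟩ := le_one_iff_exists_coeIdeal.mp hJ
  rw [Cfrac_coeIdeal, coeIdeal_le_coeIdeal]
  exact I.le_toIdeal_homogeneousHull 𝒜

theorem Cfrac_ne_zero {J : FractionalIdeal R⁰ K} (hJ : J ≤ 1) (h0 : J ≠ 0) :
    Cfrac 𝒜 K J ≠ 0 :=
  fun h => h0 (FractionalIdeal.le_zero_iff.mp (h ▸ le_Cfrac hJ))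

theorem Cfrac_fg {J : FractionalIdeal R⁰ K} (hJ : J ≤ 1)
    (hfg : (J : Submodule R K).FG) : (Cfrac 𝒜 K J : Submodule R K).FG := by
  obtain ⟨I, rfl⟩ := le_one_iff_exists_coeIdeal.mp hJ
  rw [coeIdeal_fg _ (IsFractionRing.injective R K)] at hfg
  rw [Cfrac_coeIdeal, coeIdeal_fg _ (IsFractionRing.injective R K)]
  exact hfg.toIdeal_homogeneousHull 𝒜

variable (𝒜 K) in
theorem isHomFrac_Cfrac [Nontrivial R] (J : FractionalIdeal R⁰ K) :
    IsHomFrac 𝒜 K (Cfrac 𝒜 K J) := by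
  refine ⟨1, one_ne_zero, ⟨0, SetLike.one_mem_graded 𝒜⟩, ?_, ?_⟩ <;>
    rw [map_one, spanSingleton_one, one_mul, Cfrac]
  · exact coeIdeal_le_one
  · rw [idealOf_coeIdeal, isHomIdeal_iff_isHomogeneous, homC_eq_toIdeal_homogeneousHull]
    exact HomogeneousIdeal.isHomogeneous _

end Cfrac

section Domain

variable {R : Type*} [CommRing R] {K : Type*} [Field K] [Algebra R K] [IsFractionRing R K]

theorem FractionalIdeal.exists_spanSingleton_mul_le_one [IsDomain R] (A : FractionalIdeal R⁰ K) :
    ∃ z : K, z ≠ 0 ∧ spanSingleton R⁰ z * A ≤ 1 := by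
  obtain ⟨a, I, ha, rfl⟩ := exists_eq_spanSingleton_mul A
  have ha' : algebraMap R K a ≠ 0 := (map_ne_zero_iff _ (IsFractionRing.injective R K)).mpr ha
  refine ⟨algebraMap R K a, ha', ?_⟩
  rw [← mul_assoc, spanSingleton_mul_spanSingleton, mul_inv_cancel₀ ha', spanSingleton_one,
    one_mul]
  exact coeIdeal_le_one

theorem FractionalIdeal.spanSingleton_mul_ne_zero {z : K} (hz : z ≠ 0) {B : FractionalIdeal R⁰ K}
    (hB : B ≠ 0) : spanSingleton R⁰ z * B ≠ 0 := by
  intro h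
  apply hB
  calc B = spanSingleton R⁰ z⁻¹ * (spanSingleton R⁰ z * B) := by
        rw [← mul_assoc, spanSingleton_mul_spanSingleton, inv_mul_cancel₀ hz, spanSingleton_one,
          one_mul]
    _ = 0 := by rw [h, mul_zero]

theorem finTypeSet_mono [IsDomain R] {f g : FractionalIdeal R⁰ K → FractionalIdeal R⁰ K}
    (h : ∀ B : FractionalIdeal R⁰ K, B ≠ 0 → (B : Submodule R K).FG → f B ≤ g B)
    (A : FractionalIdeal R⁰ K) :
    finTypeSet K f A ⊆ finTypeSet K g A := by
  unfold finTypeSet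
  exact Set.biUnion_mono subset_rfl fun B hB _ hx => h B hB.1 hB.2.2 hx

end Domain

section EStar

variable {Γ : Type*} [AddCommMonoid Γ] [LinearOrder Γ] [IsOrderedCancelAddMonoid Γ] [DecidableEq Γ]
  {R : Type*} [CommRing R] [IsDomain R] {𝒜 : Γ → AddSubgroup R} [GradedRing 𝒜]
  {K : Type*} [Field K] [Algebra R K] [IsFractionRing R K]

theorem mem_eStar {s : HomStarOp 𝒜 K} {A : FractionalIdeal R⁰ K} {x : K} :
    x ∈ eStar 𝒜 K s A ↔ ∀ z : K, z ≠ 0 → spanSingleton R⁰ z * A ≤ 1 →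
      x ∈ spanSingleton R⁰ z⁻¹ * s.toFun (Cfrac 𝒜 K (spanSingleton R⁰ z * A)) := by
  obtain ⟨z, hz, hzA⟩ := A.exists_spanSingleton_mul_le_one
  have hfrac : IsFractional R⁰ (eStarSub 𝒜 K s A) := isFractional_of_le (iInf₂_le z ⟨hz, hzA⟩)
  rw [show eStar 𝒜 K s A = ⟨_, hfrac⟩ from dif_pos hfrac]
  show x ∈ eStarSub 𝒜 K s A ↔ _
  simp only [eStarSub, Submodule.mem_iInf, Set.mem_ofPred_eq, mem_coe, and_imp]

theorem eStar_congr {s t : HomStarOp 𝒜 K} {A : FractionalIdeal R⁰ K}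
    (h : ∀ z : K, z ≠ 0 → spanSingleton R⁰ z * A ≤ 1 →
      s.toFun (Cfrac 𝒜 K (spanSingleton R⁰ z * A)) = t.toFun (Cfrac 𝒜 K (spanSingleton R⁰ z * A))) :
    eStar 𝒜 K s A = eStar 𝒜 K t A := by
  ext x
  rw [mem_eStar, mem_eStar]
  exact forall₃_congr fun z hz hzA => by rw [h z hz hzA]

theorem StarOp.le_eStar (t : StarOp R K) (s : HomStarOp 𝒜 K)
    (hts : ∀ C, C ≠ 0 → IsHomFrac 𝒜 K C → t.toFun C ≤ s.toFun C) {B : FractionalIdeal R⁰ K}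
    (hB : B ≠ 0) : t.toFun B ≤ eStar 𝒜 K s B := by
  intro x hx
  rw [mem_eStar]
  intro z hz hzB
  have hzB0 := spanSingleton_mul_ne_zero hz hB
  have hC0 : Cfrac 𝒜 K (spanSingleton R⁰ z * B) ≠ 0 := Cfrac_ne_zero hzB hzB0
  have hzx : z * x ∈ s.toFun (Cfrac 𝒜 K (spanSingleton R⁰ z * B)) := by
    refine hts _ hC0 (isHomFrac_Cfrac 𝒜 K _) (t.mono _ _ hzB0 hC0 (le_Cfrac hzB) ?_)
    rw [t.map_smul z hz B hB]
    exact mul_mem_mul (mem_spanSingleton_self _ z) hx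
  refine mem_singleton_mul.mpr ⟨z * x, hzx, ?_⟩
  rw [← mul_assoc, inv_mul_cancel₀ hz, one_mul]

/-- `sf.IsFinTypeOf s` says that `sf` is the operation `⋆_f` attached to `⋆ = s`. -/
def HomStarOp.IsFinTypeOf (sf s : HomStarOp 𝒜 K) : Prop :=
  ∀ A, A ≠ 0 → IsHomFrac 𝒜 K A → {x : K | x ∈ sf.toFun A} = homFinTypeSet 𝒜 K s.toFun A

namespace HomStarOp.IsFinTypeOf

variable {s sf : HomStarOp 𝒜 K}

theorem toFun_le (h : sf.IsFinTypeOf s) {C : FractionalIdeal R⁰ K} (hC0 : C ≠ 0)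
    (hC : IsHomFrac 𝒜 K C) : sf.toFun C ≤ s.toFun C := by
  intro x hx
  have hx' : x ∈ homFinTypeSet 𝒜 K s.toFun C := h C hC0 hC ▸ hx
  obtain ⟨B, ⟨hB0, hBC, hB, -⟩, hxB⟩ := Set.mem_iUnion₂.mp hx'
  exact s.mono B C hB0 hC0 hB hC hBC hxB

theorem toFun_eq_of_fg (h : sf.IsFinTypeOf s) {C : FractionalIdeal R⁰ K} (hC0 : C ≠ 0)
    (hC : IsHomFrac 𝒜 K C) (hfg : (C : Submodule R K).FG) : s.toFun C = sf.toFun C := by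
  refine le_antisymm (fun x hx => ?_) (h.toFun_le hC0 hC)
  have hx' : x ∈ homFinTypeSet 𝒜 K s.toFun C :=
    Set.mem_iUnion₂.mpr ⟨C, ⟨hC0, le_rfl, hC, hfg⟩, hx⟩
  rwa [← h C hC0 hC] at hx'

theorem eStar_eq_of_fg (h : sf.IsFinTypeOf s) {B : FractionalIdeal R⁰ K} (hB0 : B ≠ 0)
    (hfg : (B : Submodule R K).FG) : eStar 𝒜 K s B = eStar 𝒜 K sf B := by
  refine eStar_congr fun z hz hzB =>
    h.toFun_eq_of_fg (Cfrac_ne_zero hzB (spanSingleton_mul_ne_zero hz hB0)) (isHomFrac_Cfrac 𝒜 K _)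
      (Cfrac_fg hzB ?_)
  rw [coe_mul, coe_spanSingleton]
  exact (Submodule.fg_span_singleton z).mul hfg

end HomStarOp.IsFinTypeOf

end EStar

/-- `(e(⋆))_f = (e(⋆_f))_f`, and `(e(⋆))_f` is the largest finite-type classical
star operation extending `⋆_f`. -/
theorem stmt_7
    {Γ : Type*} [AddCommMonoid Γ] [LinearOrder Γ] [IsOrderedCancelAddMonoid Γ] [DecidableEq Γ]
    {R : Type*} [CommRing R] [IsDomain R]
    (𝒜 : Γ → AddSubgroup R) [GradedRing 𝒜]
    (K : Type*) [Field K] [Algebra R K] [IsFractionRing R K]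
    (s sf : HomStarOp 𝒜 K)
    (hsf : ∀ A : FractionalIdeal (nonZeroDivisors R) K, A ≠ 0 → IsHomFrac 𝒜 K A →
      {x : K | x ∈ sf.toFun A} = homFinTypeSet 𝒜 K s.toFun A) :
    (∀ A : FractionalIdeal (nonZeroDivisors R) K, A ≠ 0 →
      finTypeSet K (eStar 𝒜 K s) A = finTypeSet K (eStar 𝒜 K sf) A) ∧
    (∀ t : StarOp R K,
      (∀ A : FractionalIdeal (nonZeroDivisors R) K, A ≠ 0 →
        {x : K | x ∈ t.toFun A} = finTypeSet K t.toFun A) →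
      (∀ A : FractionalIdeal (nonZeroDivisors R) K, A ≠ 0 → IsHomFrac 𝒜 K A →
        t.toFun A = sf.toFun A) →
      (∀ A : FractionalIdeal (nonZeroDivisors R) K, A ≠ 0 →
        {x : K | x ∈ t.toFun A} ⊆ finTypeSet K (eStar 𝒜 K s) A)) := by
  have hfin : sf.IsFinTypeOf s := hsf
  refine ⟨fun A _ => ?_, fun t ht hteq A hA => ?_⟩
  · exact (finTypeSet_mono (fun B hB0 hfg => (hfin.eStar_eq_of_fg hB0 hfg).le) A).antisymm
      (finTypeSet_mono (fun B hB0 hfg => (hfin.eStar_eq_of_fg hB0 hfg).ge) A)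
  · have hts : ∀ C, C ≠ 0 → IsHomFrac 𝒜 K C → t.toFun C ≤ s.toFun C := fun C hC0 hC =>
      (hteq C hC0 hC).trans_le (hfin.toFun_le hC0 hC)
    exact (ht A hA).subset.trans (finTypeSet_mono (fun B hB0 _ => t.le_eStar s hts hB0) A)
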